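/- For every positive integer k, with q_k(x,y) := sin(kx)(cos y − cos 2y) and v_k(x,y) := sin(kx)( (k²+1)⁻¹ cos y − 4(k²+4)⁻¹ cos 2y ), one has ∫_{(0,π)×(0,π)} (∂q_k/∂y)(x,y) · (∂v_k/∂y)(x,y) dx dy = ∫_{(0,π)×(0,π)} |∇v_k(x,y)|² dx dy (both equal (π²/4)(1/(k²+1) + 16/(k²+4))). -/

import Mathlib

open scoped Real

/-- `q_k(x,y) = sin(kx)(cos y − cos 2y)`. -/
noncomputable def qfun (k : ℕ) (x y : ℝ) : ℝ :=
  Real.sin ((k : ℝ) * x) * (Real.cos y - Real.cos (2 * y))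

/-- `v_k(x,y) = sin(kx)((k²+1)⁻¹ cos y − 4(k²+4)⁻¹ cos 2y)`. -/
noncomputable def vfun (k : ℕ) (x y : ℝ) : ℝ :=
  Real.sin ((k : ℝ) * x) *
    (((k : ℝ) ^ 2 + 1)⁻¹ * Real.cos y - 4 * ((k : ℝ) ^ 2 + 4)⁻¹ * Real.cos (2 * y))

/-!
All three integrands are sums of products `f(x) u(y)`, so each double integral factors.
In `x` only `∫₀^π sin² (kx) = ∫₀^π cos² (kx) = π/2` enter; in `y`, the functions
`sin y, sin 2y` (and `cos y, cos 2y`) are orthogonal on `(0, π)` with squared norm `π/2`,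
so every `y`-integral is a diagonal quadratic form in the coefficients. With
`α = (k²+1)⁻¹`, `β = (k²+4)⁻¹` the Dirichlet energy becomes
`(π²/4)(α² (k²+1) + 16 β² (k²+4)) = (π²/4)(α + 16 β)`, the left-hand side.
-/

open Real intervalIntegral

theorem integral_cos_int_mul_eq_zero {j : ℤ} (hj : j ≠ 0) : ∫ x in 0..π, cos (j * x) = 0 := by
  have hj' : (j : ℝ) ≠ 0 := Int.cast_ne_zero.2 hj
  rw [integral_comp_mul_left (fun x => cos x) hj', integral_cos, mul_zero, sin_zero,
    sin_int_mul_pi]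
  simp

theorem sin_nat_mul_mul_sin_nat_mul (m n : ℕ) (x : ℝ) :
    sin (m * x) * sin (n * x) =
      (cos (((m - n : ℤ) : ℝ) * x) - cos (((m + n : ℤ) : ℝ) * x)) / 2 := by
  push_cast
  rw [sub_mul, add_mul, cos_sub, cos_add]
  ring

theorem cos_nat_mul_mul_cos_nat_mul (m n : ℕ) (x : ℝ) :
    cos (m * x) * cos (n * x) =
      (cos (((m - n : ℤ) : ℝ) * x) + cos (((m + n : ℤ) : ℝ) * x)) / 2 := by
  push_cast
  rw [sub_mul, add_mul, cos_sub, cos_add]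
  ring

theorem integral_sin_nat_mul_mul_sin_nat_mul_of_ne {m n : ℕ} (h : m ≠ n) :
    ∫ x in 0..π, sin (m * x) * sin (n * x) = 0 := by
  simp_rw [sin_nat_mul_mul_sin_nat_mul]
  rw [integral_div, integral_sub, integral_cos_int_mul_eq_zero (by omega),
    integral_cos_int_mul_eq_zero (by omega)]
  · simp
  all_goals exact Continuous.intervalIntegrable (by fun_prop) _ _

theorem integral_cos_nat_mul_mul_cos_nat_mul_of_ne {m n : ℕ} (h : m ≠ n) :
    ∫ x in 0..π, cos (m * x) * cos (n * x) = 0 := by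
  simp_rw [cos_nat_mul_mul_cos_nat_mul]
  rw [integral_div, integral_add, integral_cos_int_mul_eq_zero (by omega),
    integral_cos_int_mul_eq_zero (by omega)]
  · simp
  all_goals exact Continuous.intervalIntegrable (by fun_prop) _ _

theorem integral_sin_nat_mul_sq {n : ℕ} (hn : n ≠ 0) :
    ∫ x in 0..π, sin (n * x) ^ 2 = π / 2 := by
  simp_rw [sq, sin_nat_mul_mul_sin_nat_mul, sub_self, Int.cast_zero, zero_mul, cos_zero]
  rw [integral_div, integral_sub, integral_cos_int_mul_eq_zero (by omega)]
  · simp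
  all_goals exact Continuous.intervalIntegrable (by fun_prop) _ _

theorem integral_cos_nat_mul_sq {n : ℕ} (hn : n ≠ 0) :
    ∫ x in 0..π, cos (n * x) ^ 2 = π / 2 := by
  simp_rw [sq, cos_nat_mul_mul_cos_nat_mul, sub_self, Int.cast_zero, zero_mul, cos_zero]
  rw [integral_div, integral_add, integral_cos_int_mul_eq_zero (by omega)]
  · simp
  all_goals exact Continuous.intervalIntegrable (by fun_prop) _ _

theorem integral_sub_mul_sub {f g : ℝ → ℝ} (hf : Continuous f) (hg : Continuous g)
    (s t a b c d : ℝ) :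
    ∫ x in s..t, (a * f x - b * g x) * (c * f x - d * g x) =
      a * c * (∫ x in s..t, f x ^ 2) - (a * d + b * c) * (∫ x in s..t, f x * g x)
        + b * d * (∫ x in s..t, g x ^ 2) := by
  have expand : ∀ x, (a * f x - b * g x) * (c * f x - d * g x) =
      a * c * f x ^ 2 - (a * d + b * c) * (f x * g x) + b * d * g x ^ 2 := fun x => by ring
  simp_rw [expand]
  rw [integral_add, integral_sub, integral_const_mul, integral_const_mul, integral_const_mul]
  all_goals exact Continuous.intervalIntegrable (by fun_prop) _ _

theorem integral_sin_two_mul_sub_sin_mul (a b c d : ℝ) :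
    ∫ y in 0..π, (a * sin (2 * y) - b * sin y) * (c * sin (2 * y) - d * sin y) =
      π / 2 * (a * c + b * d) := by
  have h22 := integral_sin_nat_mul_sq two_ne_zero
  have h11 := integral_sin_nat_mul_sq one_ne_zero
  have h21 := integral_sin_nat_mul_mul_sin_nat_mul_of_ne (m := 2) (n := 1) (by norm_num)
  push_cast at h22 h11 h21
  simp only [one_mul] at h11 h21
  rw [integral_sub_mul_sub (f := fun y => sin (2 * y)) (by fun_prop) continuous_sin,
    h22, h11, h21]
  ring

theorem integral_cos_sub_cos_two_mul_mul (a b c d : ℝ) :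
    ∫ y in 0..π, (a * cos y - b * cos (2 * y)) * (c * cos y - d * cos (2 * y)) =
      π / 2 * (a * c + b * d) := by
  have h22 := integral_cos_nat_mul_sq two_ne_zero
  have h11 := integral_cos_nat_mul_sq one_ne_zero
  have h12 := integral_cos_nat_mul_mul_cos_nat_mul_of_ne (m := 1) (n := 2) (by norm_num)
  push_cast at h22 h11 h12
  simp only [one_mul] at h11 h12
  rw [integral_sub_mul_sub (g := fun y => cos (2 * y)) continuous_cos (by fun_prop),
    h22, h11, h12]
  ring

theorem integral_integral_mul_mul (f g u v : ℝ → ℝ) (a b c d : ℝ) :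
    ∫ x in a..b, ∫ y in c..d, f x * u y * (g x * v y) =
      (∫ x in a..b, f x * g x) * ∫ y in c..d, u y * v y := by
  simp_rw [mul_mul_mul_comm, integral_const_mul, integral_mul_const]

theorem integral_integral_sq_add_sq {f g u v : ℝ → ℝ} (hf : Continuous f) (hg : Continuous g)
    (hu : Continuous u) (hv : Continuous v) (a b c d : ℝ) :
    ∫ x in a..b, ∫ y in c..d, (f x * u y) ^ 2 + (g x * v y) ^ 2 =
      (∫ x in a..b, f x ^ 2) * (∫ y in c..d, u y ^ 2) +
        (∫ x in a..b, g x ^ 2) * ∫ y in c..d, v y ^ 2 := by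
  have inner : ∀ x, ∫ y in c..d, (f x * u y) ^ 2 + (g x * v y) ^ 2 =
      f x ^ 2 * (∫ y in c..d, u y ^ 2) + g x ^ 2 * ∫ y in c..d, v y ^ 2 := fun x => by
    simp_rw [mul_pow]
    rw [integral_add, integral_const_mul, integral_const_mul]
    all_goals exact Continuous.intervalIntegrable (by fun_prop) _ _
  simp_rw [inner]
  rw [integral_add, integral_mul_const, integral_mul_const]
  all_goals exact Continuous.intervalIntegrable (by fun_prop) _ _

theorem hasDerivAt_cos_const_mul (c y : ℝ) :
    HasDerivAt (fun y => cos (c * y)) (-(c * sin (c * y))) y := by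
  convert ((hasDerivAt_id' y).const_mul c).cos using 1
  ring

theorem deriv_qfun_y (k : ℕ) (x y : ℝ) :
    deriv (fun y' => qfun k x y') y = sin (k * x) * (2 * sin (2 * y) - sin y) := by
  refine (((hasDerivAt_cos y).sub (hasDerivAt_cos_const_mul 2 y)).const_mul
    (sin (k * x))).deriv.trans ?_
  ring

theorem deriv_vfun_y (k : ℕ) (x y : ℝ) :
    deriv (fun y' => vfun k x y') y =
      sin (k * x) * (8 * ((k : ℝ) ^ 2 + 4)⁻¹ * sin (2 * y) - ((k : ℝ) ^ 2 + 1)⁻¹ * sin y) := by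
  refine ((((hasDerivAt_cos y).const_mul _).sub
    ((hasDerivAt_cos_const_mul 2 y).const_mul _)).const_mul (sin (k * x))).deriv.trans ?_
  ring

theorem deriv_vfun_x (k : ℕ) (x y : ℝ) :
    deriv (fun x' => vfun k x' y) x =
      k * cos (k * x) *
        (((k : ℝ) ^ 2 + 1)⁻¹ * cos y - 4 * ((k : ℝ) ^ 2 + 4)⁻¹ * cos (2 * y)) := by
  refine ((((hasDerivAt_id' x).const_mul (k : ℝ)).sin).mul_const _).deriv.trans ?_
  ring

/-- For every positive integer `k`:
`∫_Ω ∂_y q_k ∂_y v_k = ∫_Ω |∇v_k|²`, both being equal to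
`(π²/4)(1/(k²+1) + 16/(k²+4))`. -/
theorem stmt19 (k : ℕ) (hk : 1 ≤ k) :
    (∫ x in (0:ℝ)..π, ∫ y in (0:ℝ)..π,
        (deriv (fun y' => qfun k x y') y) * (deriv (fun y' => vfun k x y') y))
      = (∫ x in (0:ℝ)..π, ∫ y in (0:ℝ)..π,
          ((deriv (fun x' => vfun k x' y) x) ^ 2 + (deriv (fun y' => vfun k x y') y) ^ 2))
    ∧ (∫ x in (0:ℝ)..π, ∫ y in (0:ℝ)..π,
        (deriv (fun y' => qfun k x y') y) * (deriv (fun y' => vfun k x y') y))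
      = π ^ 2 / 4 * (1 / ((k : ℝ) ^ 2 + 1) + 16 / ((k : ℝ) ^ 2 + 4)) := by
  have hk0 : k ≠ 0 := by omega
  simp only [deriv_qfun_y, deriv_vfun_y, deriv_vfun_x]
  rw [integral_integral_mul_mul (fun x => sin (k * x)),
    integral_integral_sq_add_sq (by fun_prop) (by fun_prop) (by fun_prop) (by fun_prop)]
  set α : ℝ := ((k : ℝ) ^ 2 + 1)⁻¹ with hα
  set β : ℝ := ((k : ℝ) ^ 2 + 4)⁻¹ with hβ
  have hsin : ∫ x in 0..π, sin (k * x) * sin (k * x) = π / 2 := by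
    simpa only [sq] using integral_sin_nat_mul_sq hk0
  have hcos : ∫ x in 0..π, (k * cos (k * x)) ^ 2 = k ^ 2 * (π / 2) := by
    simp_rw [mul_pow, integral_const_mul, integral_cos_nat_mul_sq hk0]
  have hqv : ∫ y in 0..π, (2 * sin (2 * y) - sin y) * (8 * β * sin (2 * y) - α * sin y) =
      π / 2 * (2 * (8 * β) + α) := by
    simpa only [one_mul] using integral_sin_two_mul_sub_sin_mul 2 1 (8 * β) α
  have hvy : ∫ y in 0..π, (8 * β * sin (2 * y) - α * sin y) ^ 2 =
      π / 2 * (8 * β * (8 * β) + α * α) := by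
    simpa only [sq] using integral_sin_two_mul_sub_sin_mul (8 * β) α (8 * β) α
  have hvx : ∫ y in 0..π, (α * cos y - 4 * β * cos (2 * y)) ^ 2 =
      π / 2 * (α * α + 4 * β * (4 * β)) := by
    simpa only [sq] using integral_cos_sub_cos_two_mul_mul α (4 * β) α (4 * β)
  rw [hsin, hcos, integral_sin_nat_mul_sq hk0, hqv, hvy, hvx, hα, hβ]
  have h1 : (k : ℝ) ^ 2 + 1 ≠ 0 := by positivity
  have h4 : (k : ℝ) ^ 2 + 4 ≠ 0 := by positivity
  constructor <;> field_simp <;> ring
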